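/- Negative-binomial limit of the sampling probability under strong negative selection proportional to the sample size (equation (9a) of the paper): fix θ₁, θ₂ > 0, a natural number n₁, and β̃ < 0. For each natural number n₂, set n = n₁ + n₂, β = β̃·n₂, and define q(n₁,n₂;β) := C(n,n₁) · I(n₁,n₂,β) / I(0,0,β), where C(n,n₁) is the binomial coefficient and I(m₁,m₂,β) := ∫₀¹ x^{θ₁+m₁-1}(1-x)^{θ₂+m₂-1} e^{βx} dx. Then lim_{n₂ → ∞} q(n₁,n₂;β̃n₂) = (Γ(θ₁+n₁)/(n₁!·Γ(θ₁))) · (1/(1+|β̃|))^{n₁} · (|β̃|/(1+|β̃|))^{θ₁}. -/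

import Mathlib

/-!
Substituting `x = y / n` turns `n ^ s * ∫₀¹ x^(s-1) (1-x)^(θ₂+n-1) e^(β̃ n x) dx` into
`∫₀ⁿ y^(s-1) (1 - y/n)^(θ₂+n-1) e^(β̃ y) dy`, which by dominated convergence tends to
`∫₀^∞ y^(s-1) e^(-(1+|β̃|) y) dy = Γ(s) (1+|β̃|)^(-s)`. In the same way
`n ^ θ₁ * ∫₀¹ x^(θ₁-1) (1-x)^(θ₂-1) e^(β̃ n x) dx → Γ(θ₁) |β̃|^(-θ₁)`, the mass near `x = 1` being
exponentially small. Since `C(n₁+n, n₁) ~ n^n₁ / n₁!`, the powers of `n` cancel in the ratio.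
-/

open Real Filter Topology

open MeasureTheory Set intervalIntegral Asymptotics

theorem rpow_le_max_one_rpow {a x : ℝ} (p : ℝ) (ha : 0 < a) (hax : a ≤ x) (hx : x ≤ 1) :
    x ^ p ≤ max 1 (a ^ p) := by
  rcases le_or_gt 0 p with hp | hp
  · exact le_max_of_le_left (rpow_le_one (ha.le.trans hax) hx hp)
  · exact le_max_of_le_right (rpow_le_rpow_of_nonpos ha hax hp.le)

theorem intervalIntegrable_rpow_mul_one_sub_rpow {s t : ℝ} (hs : 0 < s) (ht : 0 < t) :
    IntervalIntegrable (fun x => x ^ (s - 1) * (1 - x) ^ (t - 1)) volume 0 1 := by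
  have hleft :
      IntervalIntegrable (fun x : ℝ => x ^ (s - 1) * (1 - x) ^ (t - 1)) volume 0 (1 / 2) := by
    refine (intervalIntegrable_rpow' (by linarith)).mul_continuousOn ?_
    rw [uIcc_of_le (by norm_num)]
    exact fun x hx => ((continuousAt_const.sub continuousAt_id).rpow_const
      (Or.inl (by simp only [Pi.sub_apply, id]; linarith [hx.2]))).continuousWithinAt
  have hright :
      IntervalIntegrable (fun x : ℝ => x ^ (s - 1) * (1 - x) ^ (t - 1)) volume (1 / 2) 1 := by
    have h := (intervalIntegrable_rpow' (r := t - 1) (a := 0) (b := 1 / 2)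
      (by linarith)).comp_sub_left 1
    norm_num at h
    refine h.symm.continuousOn_mul ?_
    rw [uIcc_of_le (by norm_num)]
    exact fun x hx => (continuousAt_id.rpow_const
      (Or.inl (by simp only [id]; linarith [hx.1]))).continuousWithinAt
  exact hleft.trans hright

theorem tendsto_one_sub_div_rpow_add_exp (y c : ℝ) :
    Tendsto (fun n : ℕ => (1 - y / n) ^ ((n : ℝ) + c)) atTop (𝓝 (exp (-y))) := by
  have hbase : Tendsto (fun n : ℕ => 1 - y / n) atTop (𝓝 1) := by
    simpa using (tendsto_const_div_atTop_nhds_zero_nat y).const_sub 1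
  have hc : Tendsto (fun n : ℕ => (1 - y / n) ^ c) atTop (𝓝 1) := by
    simpa using hbase.rpow_const (Or.inl one_ne_zero)
  have hpow : Tendsto (fun n : ℕ => (1 - y / n) ^ n) atTop (𝓝 (exp (-y))) := by
    simpa [sub_eq_add_neg, neg_div] using tendsto_one_add_div_pow_exp (-y)
  refine (by simpa using hpow.mul hc : Tendsto _ _ (𝓝 (exp (-y)))).congr' ?_
  filter_upwards [hbase.eventually (lt_mem_nhds one_pos)] with n hn
  rw [rpow_add hn, rpow_natCast]

theorem rpow_mul_integral_rpow_mul_eq {c a : ℝ} (hc : 0 < c) (ha : 0 ≤ a) (s : ℝ)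
    (f : ℝ → ℝ) :
    c ^ s * ∫ x in 0..a, x ^ (s - 1) * f x = ∫ y in 0..c * a, y ^ (s - 1) * f (y / c) := by
  have hpow : ∀ y ∈ uIcc 0 (c * a), y ^ (s - 1) * f (y / c) =
      c ^ (s - 1) * ((y / c) ^ (s - 1) * f (y / c)) := by
    intro y hy
    rw [uIcc_of_le (by positivity)] at hy
    rw [← mul_assoc, ← mul_rpow hc.le (div_nonneg hy.1 hc.le), mul_div_cancel₀ _ hc.ne']
  rw [integral_congr hpow, intervalIntegral.integral_const_mul,
    integral_comp_div (fun x => x ^ (s - 1) * f x) hc.ne', zero_div,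
    mul_div_cancel_left₀ _ hc.ne', smul_eq_mul, ← mul_assoc, ← rpow_add_one hc.ne', sub_add_cancel]

theorem tendsto_rpow_mul_integral_of_tendsto_comp_div {s a : ℝ} (ha : 0 < a)
    {g : ℕ → ℝ → ℝ} {G B : ℝ → ℝ} (hg : ∀ n, Measurable (g n))
    (hB : IntegrableOn (fun y => y ^ (s - 1) * B y) (Ioi 0))
    (hgB : ∀ (n : ℕ) (y : ℝ), 0 < y → y ≤ n * a → |g n (y / n)| ≤ B y)
    (hgG : ∀ y, 0 < y → Tendsto (fun n : ℕ => g n (y / n)) atTop (𝓝 (G y))) :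
    Tendsto (fun n : ℕ => (n : ℝ) ^ s * ∫ x in 0..a, x ^ (s - 1) * g n x) atTop
      (𝓝 (∫ y in Ioi 0, y ^ (s - 1) * G y)) := by
  set F : ℕ → ℝ → ℝ :=
    fun n => (Ioc 0 (n * a)).indicator fun y => y ^ (s - 1) * g n (y / n)
  have hF : ∀ n : ℕ, 0 < n →
      ∫ y in Ioi 0, F n y = (n : ℝ) ^ s * ∫ x in 0..a, x ^ (s - 1) * g n x := by
    intro n hn
    rw [rpow_mul_integral_rpow_mul_eq (Nat.cast_pos.2 hn) ha.le,
      integral_of_le (by positivity), setIntegral_indicator measurableSet_Ioc,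
      inter_eq_self_of_subset_right Ioc_subset_Ioi_self]
  refine (tendsto_integral_of_dominated_convergence _ (fun n => ?_) hB (fun n => ?_) ?_).congr'
    (eventually_atTop.2 ⟨1, fun n hn => hF n hn⟩)
  · exact ((measurable_id.pow_const _).mul ((hg n).comp
      (measurable_id.div_const _))).indicator measurableSet_Ioc |>.aestronglyMeasurable
  · refine (ae_restrict_iff' measurableSet_Ioi).2 (Eventually.of_forall fun y (hy : 0 < y) => ?_)
    by_cases hyn : y ∈ Ioc 0 (n * a)
    · rw [show F n y = _ from indicator_of_mem hyn _, norm_mul,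
        norm_of_nonneg (rpow_nonneg hy.le _), norm_eq_abs]
      exact mul_le_mul_of_nonneg_left (hgB n y hy hyn.2) (rpow_nonneg hy.le _)
    · obtain ⟨m, hm⟩ := exists_nat_ge (y / a)
      have hB0 : 0 ≤ B y := (abs_nonneg _).trans (hgB m y hy ((div_le_iff₀ ha).1 hm))
      rw [show F n y = 0 from indicator_of_notMem hyn _, norm_zero]
      exact mul_nonneg (rpow_nonneg hy.le _) hB0
  · refine (ae_restrict_iff' measurableSet_Ioi).2 (Eventually.of_forall fun y (hy : 0 < y) => ?_)
    refine ((hgG y hy).const_mul _).congr' ?_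
    filter_upwards [(tendsto_natCast_atTop_atTop.atTop_mul_const ha).eventually_ge_atTop y]
      with n hn
    exact (indicator_of_mem (mem_Ioc.2 ⟨hy, hn⟩) fun y => y ^ (s - 1) * g n (y / n)).symm

theorem tendsto_rpow_mul_integral_mul_exp_nhds_zero {f : ℝ → ℝ} {a c b : ℝ} (s : ℝ)
    (ha : 0 < a) (hac : a ≤ c) (hb : b < 0) (hf : IntervalIntegrable f volume a c) :
    Tendsto (fun n : ℕ => (n : ℝ) ^ s * ∫ x in a..c, f x * exp (b * n * x)) atTop
      (𝓝 0) := by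
  have hdecay : Tendsto (fun n : ℕ => (n : ℝ) ^ s * exp (b * n * a)) atTop (𝓝 0) := by
    refine ((tendsto_rpow_mul_exp_neg_mul_atTop_nhds_zero s (-b * a) (by nlinarith)).comp
      tendsto_natCast_atTop_atTop).congr fun n => ?_
    simp only [Function.comp_apply]
    ring_nf
  refine squeeze_zero_norm (fun n => ?_) (by simpa using hdecay.mul_const (∫ x in a..c, |f x|))
  have hint :
      ‖∫ x in a..c, f x * exp (b * n * x)‖ ≤ ∫ x in a..c, exp (b * n * a) * |f x| := by
    refine norm_integral_le_of_norm_le hac (Eventually.of_forall fun x hx => ?_)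
      (hf.abs.const_mul _)
    rw [norm_mul, norm_eq_abs, norm_of_nonneg (exp_pos _).le, mul_comm]
    have : b * n * x ≤ b * n * a :=
      mul_le_mul_of_nonpos_left hx.1.le (mul_nonpos_of_nonpos_of_nonneg hb.le n.cast_nonneg)
    exact mul_le_mul_of_nonneg_right (exp_le_exp.2 this) (abs_nonneg _)
  rw [intervalIntegral.integral_const_mul] at hint
  rw [norm_mul, norm_of_nonneg (rpow_nonneg n.cast_nonneg _), mul_assoc]
  exact mul_le_mul_of_nonneg_left hint (rpow_nonneg n.cast_nonneg _)

theorem integrableOn_rpow_mul_exp_mul_Ioi {s b : ℝ} (hs : 0 < s) (hb : b < 0) :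
    IntegrableOn (fun y => y ^ (s - 1) * exp (b * y)) (Ioi 0) := by
  simpa using integrableOn_rpow_mul_exp_neg_mul_rpow (by linarith : -1 < s - 1) one_pos
    (neg_pos.2 hb)

theorem integral_rpow_mul_exp_mul_Ioi {s b : ℝ} (hs : 0 < s) (hb : b < 0) :
    ∫ y in Ioi 0, y ^ (s - 1) * exp (b * y) = (1 / -b) ^ s * Gamma s := by
  simpa using integral_rpow_mul_exp_neg_mul_Ioi hs (neg_pos.2 hb)

/-- `I(m₁, m₂, β)` of the paper is `betaExpIntegral (θ₁ + m₁) (θ₂ + m₂) β`. -/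
noncomputable def betaExpIntegral (s t b : ℝ) : ℝ :=
  ∫ x in (0 : ℝ)..1, x ^ (s - 1) * (1 - x) ^ (t - 1) * exp (b * x)

theorem tendsto_rpow_mul_betaExpIntegral_add_nat {s t b : ℝ} (hs : 0 < s) (ht : 0 < t)
    (hb : b < 0) :
    Tendsto (fun n : ℕ => (n : ℝ) ^ s * betaExpIntegral s (t + n) (b * n)) atTop
      (𝓝 ((1 / (1 - b)) ^ s * Gamma s)) := by
  have hlim := tendsto_rpow_mul_integral_of_tendsto_comp_div one_pos
    (g := fun n x => (1 - x) ^ (t + n - 1) * exp (b * (n * x))) (B := fun y => exp (b * y))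
    (G := fun y => exp ((b - 1) * y)) (fun n => by fun_prop)
    (integrableOn_rpow_mul_exp_mul_Ioi hs hb) ?bound ?pointwise
  case bound =>
    intro n y hy hyn
    have hn : (0 : ℝ) < n := hy.trans_le (by simpa using hyn)
    have hyn' : y / n ≤ 1 := (div_le_one hn).2 (by simpa using hyn)
    have hn1 : (1 : ℝ) ≤ n := Nat.one_le_cast.2 (Nat.cast_pos.1 hn)
    have hpow : (1 - y / n) ^ (t + n - 1) ≤ 1 :=
      rpow_le_one (by linarith) (by linarith [div_pos hy hn]) (by linarith)
    rw [mul_div_cancel₀ _ hn.ne',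
      abs_of_nonneg (mul_nonneg (rpow_nonneg (by linarith) _) (exp_pos _).le)]
    exact mul_le_of_le_one_left (exp_pos _).le hpow
  case pointwise =>
    intro y hy
    have h := (tendsto_one_sub_div_rpow_add_exp y (t - 1)).mul_const (exp (b * y))
    rw [← exp_add, show -y + b * y = (b - 1) * y by ring] at h
    refine h.congr' ?_
    filter_upwards [eventually_ne_atTop 0] with n hn
    rw [mul_div_cancel₀ _ (Nat.cast_ne_zero.2 hn), show (n : ℝ) + (t - 1) = t + n - 1 by ring]
  rw [integral_rpow_mul_exp_mul_Ioi hs (by linarith), neg_sub] at hlim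
  refine hlim.congr fun n => ?_
  simp only [betaExpIntegral, mul_assoc]

theorem tendsto_rpow_mul_betaExpIntegral {s t b : ℝ} (hs : 0 < s) (ht : 0 < t) (hb : b < 0) :
    Tendsto (fun n : ℕ => (n : ℝ) ^ s * betaExpIntegral s t (b * n)) atTop
      (𝓝 ((1 / -b) ^ s * Gamma s)) := by
  -- `(1 - x) ^ (t - 1)` may blow up at `x = 1`, so only `[0, 1/2]` is rescaled; on `[1/2, 1]`
  -- the factor `exp (b * n * x)` is exponentially small.
  set M := max 1 ((1 / 2 : ℝ) ^ (t - 1))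
  have hbeta := intervalIntegrable_rpow_mul_one_sub_rpow hs ht
  have hhalf : (1 / 2 : ℝ) ∈ uIcc 0 1 := by rw [uIcc_of_le zero_le_one]; norm_num
  have hint : ∀ (n : ℕ) {u v : ℝ}, uIcc u v ⊆ uIcc 0 1 → IntervalIntegrable
      (fun x => x ^ (s - 1) * (1 - x) ^ (t - 1) * exp (b * n * x)) volume u v :=
    fun n _ _ huv => (hbeta.mono_set huv).mul_continuousOn (by fun_prop)
  have hleft := tendsto_rpow_mul_integral_of_tendsto_comp_div (one_half_pos (α := ℝ))
    (g := fun n x => (1 - x) ^ (t - 1) * exp (b * (n * x))) (B := fun y => M * exp (b * y))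
    (G := fun y => exp (b * y)) (fun n => by fun_prop)
    (by simpa only [IntegrableOn, mul_left_comm] using
      (integrableOn_rpow_mul_exp_mul_Ioi hs hb).const_mul M)
    ?bound ?pointwise
  case bound =>
    intro n y hy hyn
    have hn : (0 : ℝ) < n := by nlinarith
    have hyn' : y / n ≤ 1 / 2 := by rw [div_le_iff₀ hn]; linarith
    have hpow : (1 - y / n) ^ (t - 1) ≤ M :=
      rpow_le_max_one_rpow _ one_half_pos (by linarith) (by linarith [div_pos hy hn])
    rw [mul_div_cancel₀ _ hn.ne',
      abs_of_nonneg (mul_nonneg (rpow_nonneg (by linarith) _) (exp_pos _).le)]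
    exact mul_le_mul_of_nonneg_right hpow (exp_pos _).le
  case pointwise =>
    intro y hy
    have hbase : Tendsto (fun n : ℕ => 1 - y / n) atTop (𝓝 1) := by
      simpa using (tendsto_const_div_atTop_nhds_zero_nat y).const_sub 1
    have h := (hbase.rpow_const (p := t - 1) (Or.inl one_ne_zero)).mul_const (exp (b * y))
    rw [one_rpow, one_mul] at h
    refine h.congr' ?_
    filter_upwards [eventually_ne_atTop 0] with n hn
    rw [mul_div_cancel₀ _ (Nat.cast_ne_zero.2 hn)]
  have hright := tendsto_rpow_mul_integral_mul_exp_nhds_zero s one_half_pos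
    (by norm_num : (1 / 2 : ℝ) ≤ 1) hb (hbeta.mono_set (uIcc_subset_uIcc hhalf right_mem_uIcc))
  rw [integral_rpow_mul_exp_mul_Ioi hs hb] at hleft
  have hsum := hleft.add hright
  rw [add_zero] at hsum
  refine hsum.congr fun n => ?_
  rw [betaExpIntegral, ← integral_add_adjacent_intervals
    (hint n (uIcc_subset_uIcc left_mem_uIcc hhalf))
    (hint n (uIcc_subset_uIcc hhalf right_mem_uIcc))]
  simp only [mul_assoc, mul_add]

theorem tendsto_add_choose_div_pow (k : ℕ) :
    Tendsto (fun n : ℕ => ((k + n).choose k : ℝ) / (n : ℝ) ^ k) atTop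
      (𝓝 (1 / k.factorial)) := by
  have hn0 : ∀ᶠ n : ℕ in atTop, (n : ℝ) ≠ 0 := by
    filter_upwards [eventually_ne_atTop 0] with n hn using Nat.cast_ne_zero.2 hn
  have hshift : (fun n : ℕ => ((k + n : ℕ) : ℝ)) ~[atTop] fun n => (n : ℝ) := by
    refine (isEquivalent_iff_tendsto_one hn0).2 ?_
    have h := (tendsto_const_div_atTop_nhds_zero_nat (k : ℝ)).const_add 1
    rw [add_zero] at h
    refine h.congr' ?_
    filter_upwards [hn0] with n hn
    simp [add_div, div_self hn, add_comm]
  have hchoose := (isEquivalent_choose k).comp_tendsto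
    ((tendsto_add_atTop_nat k).congr fun n => add_comm n k)
  have h := ((hchoose.trans ((hshift.pow k).div IsEquivalent.refl)).div
    (IsEquivalent.refl (u := fun n : ℕ => (n : ℝ) ^ k))).symm
  refine h.tendsto_nhds (tendsto_const_nhds.congr' ?_)
  filter_upwards [hn0] with n hn
  simp [div_div_cancel_left' (pow_ne_zero k hn)]

/-- Negative-binomial limit of the sampling probability under strong negative
selection proportional to sample size (eq. (9a)): with `β = β̃·n₂`, `β̃ < 0`, and
`q(n₁,n₂;β) = C(n₁+n₂,n₁)·I(n₁,n₂,β)/I(0,0,β)` where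
`I(m₁,m₂,β) = ∫₀¹ x^{θ₁+m₁-1}(1-x)^{θ₂+m₂-1}e^{βx} dx`,
one has
`lim_{n₂→∞} q(n₁,n₂;β̃n₂)
  = (Γ(θ₁+n₁)/(n₁!Γ(θ₁)))·(1/(1+|β̃|))^{n₁}·(|β̃|/(1+|β̃|))^{θ₁}`. -/
theorem sampling_prob_negative_binomial_limit (θ₁ θ₂ βt : ℝ)
    (hθ₁ : 0 < θ₁) (hθ₂ : 0 < θ₂) (hβ : βt < 0) (n₁ : ℕ) :
    Filter.Tendsto (fun n₂ : ℕ =>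
        (Nat.choose (n₁ + n₂) n₁ : ℝ) *
          (∫ x in (0:ℝ)..1,
            x ^ (θ₁ + n₁ - 1) * (1 - x) ^ (θ₂ + n₂ - 1) * Real.exp (βt * n₂ * x)) /
          (∫ x in (0:ℝ)..1, x ^ (θ₁ - 1) * (1 - x) ^ (θ₂ - 1) * Real.exp (βt * n₂ * x)))
      Filter.atTop
      (𝓝 ((Real.Gamma (θ₁ + n₁) / ((Nat.factorial n₁ : ℝ) * Real.Gamma θ₁)) *
        (1 / (1 + |βt|)) ^ n₁ * (|βt| / (1 + |βt|)) ^ θ₁)) := by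
  have hc : 0 < |βt| := abs_pos.2 hβ.ne
  have hnum :=
    tendsto_rpow_mul_betaExpIntegral_add_nat (by positivity : 0 < θ₁ + n₁) hθ₂ hβ
  have hden := tendsto_rpow_mul_betaExpIntegral hθ₁ hθ₂ hβ
  rw [sub_eq_add_neg, ← abs_of_neg hβ] at hnum
  rw [← abs_of_neg hβ] at hden
  have hlim := ((tendsto_add_choose_div_pow n₁).mul hnum).div hden (by positivity)
  have hL :
      1 / (n₁.factorial : ℝ) * ((1 / (1 + |βt|)) ^ (θ₁ + n₁) * Gamma (θ₁ + n₁)) /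
        ((1 / |βt|) ^ θ₁ * Gamma θ₁) =
      Gamma (θ₁ + n₁) / (n₁.factorial * Gamma θ₁) *
        (1 / (1 + |βt|)) ^ n₁ * (|βt| / (1 + |βt|)) ^ θ₁ := by
    rw [rpow_add (by positivity), rpow_natCast, div_rpow hc.le (by positivity),
      div_rpow zero_le_one hc.le, div_rpow zero_le_one (by positivity)]
    field_simp
  rw [hL] at hlim
  refine hlim.congr' ?_
  filter_upwards [eventually_ne_atTop 0] with n hn0
  have hn : (0 : ℝ) < n := Nat.cast_pos.2 (Nat.pos_of_ne_zero hn0)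
  change _ = (n₁ + n).choose n₁ * betaExpIntegral (θ₁ + n₁) (θ₂ + n) (βt * n) /
    betaExpIntegral θ₁ θ₂ (βt * n)
  simp only [Pi.div_apply]
  rw [rpow_add hn, rpow_natCast]
  field_simp
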